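/- Let p₁ ≥ 0, p₂ ∈ ℝ, p₃ ≥ 0, p₄ ∈ ℝ, p₅ ≥ 0 with p₁ = p₅, and let q₁,q₂,q₃ ∈ ℝ. If (A₁,A₂) : ℝ → ℂ² is a differentiable solution of the system (ODE) with A₁(0) ≠ 0, then A₁(τ) ≠ 0 for all τ ∈ ℝ. -/

import Mathlib

/-!
When `p₁ = p₅` the term `(p₁ - p₅)|z₂|²z₂` drops out of `F₁`, and every remaining term carries a
factor `z₁` or `conj z₁`. Along a solution this gives `‖A₁'‖ ≤ K(τ) ‖A₁‖` with `K` continuous,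
so by Grönwall's inequality (run forwards and backwards in time) a zero of `A₁` at any time
forces `A₁ ≡ 0`, contradicting `A₁ 0 ≠ 0`.
-/

/-- The real-valued quadratic form `V`. -/
noncomputable def Vq (q₁ q₂ q₃ : ℝ) (z₁ z₂ : ℂ) : ℝ :=
  q₁ * Complex.normSq z₁ + 2 * q₂ * ((starRingEnd ℂ) z₁ * z₂).re + q₃ * Complex.normSq z₂

/-- The first cubic nonlinearity `F₁`. -/
noncomputable def F₁ (p₁ p₂ p₃ p₄ p₅ q₁ q₂ q₃ : ℝ) (z₁ z₂ : ℂ) : ℂ :=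
  (3 * p₂ + p₃ + 2 * p₄) * Complex.normSq z₁ * z₁
  + (p₁ + p₅) * (2 * Complex.normSq z₁ * z₂ + z₁ ^ 2 * (starRingEnd ℂ) z₂)
  + (p₂ - p₃) * (2 * z₁ * Complex.normSq z₂ + (starRingEnd ℂ) z₁ * z₂ ^ 2)
  - (p₁ - p₅) * Complex.normSq z₂ * z₂
  - 4 * p₁ * (((starRingEnd ℂ) z₁ * z₂).re : ℝ) * z₁
  + (Vq q₁ q₂ q₃ z₁ z₂ : ℝ) * z₁

/-- The second cubic nonlinearity `F₂`. -/
noncomputable def F₂ (p₁ p₂ p₃ p₄ p₅ q₁ q₂ q₃ : ℝ) (z₁ z₂ : ℂ) : ℂ :=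
  (p₁ + p₅) * Complex.normSq z₁ * z₁
  + (p₂ - p₃) * (2 * Complex.normSq z₁ * z₂ + z₁ ^ 2 * (starRingEnd ℂ) z₂)
  - (p₁ - p₅) * (2 * z₁ * Complex.normSq z₂ + (starRingEnd ℂ) z₁ * z₂ ^ 2)
  + (3 * p₂ + p₃ - 2 * p₄) * Complex.normSq z₂ * z₂
  + 4 * p₁ * (((starRingEnd ℂ) z₁ * z₂).re : ℝ) * z₂
  + (Vq q₁ q₂ q₃ z₁ z₂ : ℝ) * z₂

open Set

section Gronwall

variable {E : Type*} [NormedAddCommGroup E] [NormedSpace ℝ E] {f f' : ℝ → E} {K : ℝ → ℝ}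

lemma eq_zero_of_norm_deriv_le_mul_norm_of_le (hf : ∀ t, HasDerivAt f (f' t) t)
    (hK : Continuous K) (hbound : ∀ t, ‖f' t‖ ≤ K t * ‖f t‖) {a b : ℝ} (hab : a ≤ b)
    (ha : f a = 0) : f b = 0 := by
  obtain ⟨C, hC⟩ := isCompact_Icc.exists_bound_of_continuousOn (hK.continuousOn (s := Icc a b))
  have hbound' : ∀ t ∈ Ico a b, ‖f' t‖ ≤ C * ‖f t‖ + 0 := fun t ht =>
    calc ‖f' t‖ ≤ K t * ‖f t‖ := hbound t
      _ ≤ C * ‖f t‖ + 0 := by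
        rw [add_zero]
        exact mul_le_mul_of_nonneg_right ((le_abs_self _).trans (hC t (Ico_subset_Icc_self ht)))
          (norm_nonneg _)
  have := norm_le_gronwallBound_of_norm_deriv_right_le
    (fun t _ => (hf t).continuousAt.continuousWithinAt) (fun t _ => (hf t).hasDerivWithinAt)
    (by simp [ha] : ‖f a‖ ≤ 0) hbound' b ⟨hab, le_rfl⟩
  rwa [gronwallBound_ε0_δ0, norm_le_zero_iff] at this

lemma eq_zero_of_norm_deriv_le_mul_norm (hf : ∀ t, HasDerivAt f (f' t) t) (hK : Continuous K)
    (hbound : ∀ t, ‖f' t‖ ≤ K t * ‖f t‖) {c : ℝ} (hc : f c = 0) (t : ℝ) : f t = 0 := by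
  rcases le_total c t with hct | htc
  · exact eq_zero_of_norm_deriv_le_mul_norm_of_le hf hK hbound hct hc
  · -- backwards in time: apply the forward statement to the reflection `s ↦ f (c + t - s)`
    have hreflect := eq_zero_of_norm_deriv_le_mul_norm_of_le (f := fun s => f (c + t - s))
      (f' := fun s => -f' (c + t - s)) (K := fun s => K (c + t - s))
      (fun s => (hf (c + t - s)).comp_const_sub (c + t) s) (by fun_prop)
      (fun s => by simpa using hbound (c + t - s)) htc (by simpa using hc)
    simpa using hreflect

end Gronwall

section Factorization

variable (p₁ p₂ p₃ p₄ q₁ q₂ q₃ : ℝ) (z₁ z₂ : ℂ)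

/-- The coefficients of `z₁` and `conj z₁` in `F₁` when `p₁ = p₅`. -/
noncomputable def F₁CoeffSelf : ℂ :=
  (3 * p₂ + p₃ + 2 * p₄) * Complex.normSq z₁ + 2 * p₁ * (z₁ * (starRingEnd ℂ) z₂)
  + 2 * (p₂ - p₃) * Complex.normSq z₂ - 4 * p₁ * (((starRingEnd ℂ) z₁ * z₂).re : ℝ)
  + (Vq q₁ q₂ q₃ z₁ z₂ : ℝ)

noncomputable def F₁CoeffConj : ℂ :=
  4 * p₁ * (z₁ * z₂) + (p₂ - p₃) * z₂ ^ 2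

lemma F₁_eq_mul_add_conj_mul :
    F₁ p₁ p₂ p₃ p₄ p₁ q₁ q₂ q₃ z₁ z₂
      = z₁ * F₁CoeffSelf p₁ p₂ p₃ p₄ q₁ q₂ q₃ z₁ z₂
        + (starRingEnd ℂ) z₁ * F₁CoeffConj p₁ p₂ p₃ z₁ z₂ := by
  simp only [F₁, F₁CoeffSelf, F₁CoeffConj, Vq, Complex.normSq_eq_conj_mul_self]
  push_cast
  ring

lemma norm_F₁_le :
    ‖F₁ p₁ p₂ p₃ p₄ p₁ q₁ q₂ q₃ z₁ z₂‖
      ≤ (‖F₁CoeffSelf p₁ p₂ p₃ p₄ q₁ q₂ q₃ z₁ z₂‖ + ‖F₁CoeffConj p₁ p₂ p₃ z₁ z₂‖) * ‖z₁‖ := by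
  rw [F₁_eq_mul_add_conj_mul]
  refine (norm_add_le _ _).trans_eq ?_
  rw [norm_mul, norm_mul, RCLike.norm_conj]
  ring

attribute [local fun_prop] Complex.continuous_normSq Complex.continuous_ofReal
  Complex.continuous_conj Complex.continuous_re

lemma continuous_F₁CoeffSelf {X : Type*} [TopologicalSpace X] {u v : X → ℂ}
    (hu : Continuous u) (hv : Continuous v) :
    Continuous fun x => F₁CoeffSelf p₁ p₂ p₃ p₄ q₁ q₂ q₃ (u x) (v x) := by
  simp only [F₁CoeffSelf, Vq]
  fun_prop

lemma continuous_F₁CoeffConj {X : Type*} [TopologicalSpace X] {u v : X → ℂ}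
    (hu : Continuous u) (hv : Continuous v) :
    Continuous fun x => F₁CoeffConj p₁ p₂ p₃ (u x) (v x) := by
  simp only [F₁CoeffConj]
  fun_prop

end Factorization

theorem stmt_15_general (p₁ p₂ p₃ p₄ p₅ q₁ q₂ q₃ : ℝ)
    (hp₁₅ : p₁ = p₅)
    (A₁ A₂ A₁' A₂' : ℝ → ℂ)
    (hA₁ : ∀ τ, HasDerivAt A₁ (A₁' τ) τ)
    (hA₂ : ∀ τ, HasDerivAt A₂ (A₂' τ) τ)
    (hODE₁ : ∀ τ, Complex.I * A₁' τ = F₁ p₁ p₂ p₃ p₄ p₅ q₁ q₂ q₃ (A₁ τ) (A₂ τ))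
    (h0 : A₁ 0 ≠ 0) :
    ∀ τ : ℝ, A₁ τ ≠ 0 := by
  subst hp₁₅
  intro τ hτ
  have hcont₁ : Continuous A₁ := continuous_iff_continuousAt.2 fun t => (hA₁ t).continuousAt
  have hcont₂ : Continuous A₂ := continuous_iff_continuousAt.2 fun t => (hA₂ t).continuousAt
  have hK := (continuous_F₁CoeffSelf p₁ p₂ p₃ p₄ q₁ q₂ q₃ hcont₁ hcont₂).norm.add
    (continuous_F₁CoeffConj p₁ p₂ p₃ hcont₁ hcont₂).norm
  have hbound (t : ℝ) :=
    calc ‖A₁' t‖ = ‖F₁ p₁ p₂ p₃ p₄ p₁ q₁ q₂ q₃ (A₁ t) (A₂ t)‖ := by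
          rw [← hODE₁, norm_mul, Complex.norm_I, one_mul]
      _ ≤ _ := norm_F₁_le p₁ p₂ p₃ p₄ q₁ q₂ q₃ (A₁ t) (A₂ t)
  exact h0 (eq_zero_of_norm_deriv_le_mul_norm hA₁ hK hbound hτ 0)

/-- If `p₁ = p₅`, a solution of the ODE system with `A₁ 0 ≠ 0` satisfies
`A₁ τ ≠ 0` for every `τ`. -/
theorem stmt_15 (p₁ p₂ p₃ p₄ p₅ q₁ q₂ q₃ : ℝ)
    (hp₁ : 0 ≤ p₁) (hp₃ : 0 ≤ p₃) (hp₅ : 0 ≤ p₅) (hp₁₅ : p₁ = p₅)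
    (A₁ A₂ A₁' A₂' : ℝ → ℂ)
    (hA₁ : ∀ τ, HasDerivAt A₁ (A₁' τ) τ)
    (hA₂ : ∀ τ, HasDerivAt A₂ (A₂' τ) τ)
    (hODE₁ : ∀ τ, Complex.I * A₁' τ = F₁ p₁ p₂ p₃ p₄ p₅ q₁ q₂ q₃ (A₁ τ) (A₂ τ))
    (hODE₂ : ∀ τ, Complex.I * A₂' τ = F₂ p₁ p₂ p₃ p₄ p₅ q₁ q₂ q₃ (A₁ τ) (A₂ τ))
    (h0 : A₁ 0 ≠ 0) :
    ∀ τ : ℝ, A₁ τ ≠ 0 :=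
  stmt_15_general p₁ p₂ p₃ p₄ p₅ q₁ q₂ q₃ hp₁₅ A₁ A₂ A₁' A₂' hA₁ hA₂ hODE₁ h0
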